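/- arXiv:1309.4822 — 12 statements merged into one kernel-verified Lean document; each statement's English description precedes it below -/
import Mathlib

section
/- Let k, l, m, n be integers. Equip the free ℤ-module with basis 1, X, Y with the ℤ-bilinear multiplication determined by: 1 is a two-sided unit, X² = 1 + mX + kY, Y² = 1 + lX + nY, and XY = YX = kX + lY. Then this multiplication is associative if and only if k² + l² = kn + lm + 1. -/
/-- The ℤ-bilinear multiplication on the free ℤ-module ℤ³ with basis `1 = (1,0,0)`,
`X = (0,1,0)`, `Y = (0,0,1)`, determined by: `1` is a two-sided unit,
`X² = 1 + mX + kY`, `Y² = 1 + lX + nY`, and `XY = YX = kX + lY`. -/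
def K3mul (k l m n : ℤ) (a b : ℤ × ℤ × ℤ) : ℤ × ℤ × ℤ :=
  (a.1 * b.1 + a.2.1 * b.2.1 + a.2.2 * b.2.2,
   a.1 * b.2.1 + a.2.1 * b.1 + m * (a.2.1 * b.2.1) + l * (a.2.2 * b.2.2)
     + k * (a.2.1 * b.2.2 + a.2.2 * b.2.1),
   a.1 * b.2.2 + a.2.2 * b.1 + k * (a.2.1 * b.2.1) + n * (a.2.2 * b.2.2)
     + l * (a.2.1 * b.2.2 + a.2.2 * b.2.1))

/-- the multiplication is associative iff `k² + l² = kn + lm + 1`. -/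
theorem stmt_0 (k l m n : ℤ) :
    (∀ a b c : ℤ × ℤ × ℤ, K3mul k l m n (K3mul k l m n a b) c
        = K3mul k l m n a (K3mul k l m n b c))
      ↔ k ^ 2 + l ^ 2 = k * n + l * m + 1 := by
  constructor
  · intro h
    have h1 := h (0,1,0) (0,1,0) (0,0,1)
    simp only [K3mul, Prod.mk.injEq] at h1
    ring_nf at h1
    linarith [h1]
  · intro h a b c
    simp only [K3mul, Prod.mk.injEq]
    refine ⟨by ring, ?_, ?_⟩
    · linear_combination (a.2.1 * b.2.2 * c.2.2 - a.2.2 * b.2.2 * c.2.1) * h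
    · linear_combination (a.2.2 * b.2.1 * c.2.1 - a.2.1 * b.2.1 * c.2.2) * h
end

section
/- Every unital based ring of rank 3 is isomorphic as a based ring either to K(k,l,m,n) for some nonnegative integers k, l, m, n satisfying k² + l² = kn + lm + 1, or to the group ring ℤ[ℤ/3ℤ] with basis given by the group elements. -/
/-- A unital based ring of finite rank, presented by its structure constants:
a ring free of finite rank over ℤ with distinguished basis `{b_i}_{i ∈ I}` containing
the unit, nonnegative structure constants `c i j k` (so `b_i · b_j = Σ_k c i j k • b_k`),
and an involution `i ↦ i*` of `I` inducing an anti-automorphism of the ring and such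
that the coefficient of `1` in `b_i · b_j` is `1` if `j = i*` and `0` otherwise. -/
structure BasedRingData (I : Type*) [Fintype I] [DecidableEq I] where
  /-- structure constants: `b_i · b_j = Σ_k (c i j k) • b_k` -/
  c : I → I → I → ℤ
  /-- the index of the unit element among the basis -/
  one : I
  /-- the involution `i ↦ i*` -/
  star : I → I
  nonneg : ∀ i j k, 0 ≤ c i j k
  one_mul : ∀ i k, c one i k = if k = i then 1 else 0
  mul_one : ∀ i k, c i one k = if k = i then 1 else 0
  assoc : ∀ i j k t, ∑ s, c i j s * c s k t = ∑ s, c j k s * c i s t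
  star_involutive : Function.Involutive star
  /-- the involution induces an anti-automorphism `b_i ↦ b_{i*}` -/
  star_anti : ∀ i j k, c i j k = c (star j) (star i) (star k)
  /-- the coefficient of `1` in `b_i · b_j` is `1` if `j = i*` and `0` otherwise -/
  coeff_one : ∀ i j, c i j one = if j = star i then 1 else 0

/-- The structure constants of the based ring `K(k,l,m,n)` with basis `1, X, Y`
(indexed by `0, 1, 2`) and multiplication `X² = 1 + mX + kY`, `Y² = 1 + lX + nY`,
`XY = YX = kX + lY`: `Kc k l m n i j` is the vector of coefficients of `b_i · b_j`. -/
def Kc (k l m n : ℤ) : Fin 3 → Fin 3 → Fin 3 → ℤ :=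
  ![![![1, 0, 0], ![0, 1, 0], ![0, 0, 1]],
    ![![0, 1, 0], ![1, m, k], ![0, k, l]],
    ![![0, 0, 1], ![0, k, l], ![1, l, n]]]

/-- The structure constants of the group ring `ℤ[ℤ/3ℤ]` with basis the group elements. -/
def Zc : ZMod 3 → ZMod 3 → ZMod 3 → ℤ :=
  fun i j t => if i + j = t then 1 else 0

/-!
The unit is fixed by the involution, so on the two other basis elements `X, Y` the involution
is either trivial or the transposition. Frobenius reciprocity `c_{ij}^{t*} = c_{jt}^{i*}` and the
anti-automorphism property leave few unknowns. For the trivial involution the structure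
constants are totally symmetric, which is the shape of `K(k,l,m,n)`, and associativity of
`Y·Y·X` is `k² + l² = kn + lm + 1`. For the transposition only `p = c_{XX}^X` and `b = c_{XX}^Y`
remain, associativity of `X·X·Y` is `b² = p² + 1`, and nonnegativity forces `p = 0`, `b = 1`:
the group ring of `ℤ/3ℤ`.
-/

theorem Int.eq_zero_and_eq_one_of_sq_eq_sq_add_one {p b : ℤ} (hp : 0 ≤ p) (hb : 0 ≤ b)
    (h : b ^ 2 = p ^ 2 + 1) : p = 0 ∧ b = 1 := by
  have hpb : p + 1 ≤ b := lt_of_pow_lt_pow_left₀ 2 hb (by omega)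
  have hp0 : p = 0 := by nlinarith
  subst hp0
  exact ⟨rfl, by nlinarith⟩

theorem Zc_finEquiv (i j t : Fin 3) :
    Zc (ZMod.finEquiv 3 i) (ZMod.finEquiv 3 j) (ZMod.finEquiv 3 t) =
      if i + j = t then 1 else 0 := by
  simp [Zc, ← map_add]

namespace BasedRingData

section

variable {I : Type*} [Fintype I] [DecidableEq I] (K : BasedRingData I)

theorem star_star (i : I) : K.star (K.star i) = i := K.star_involutive i

theorem eq_star_comm {i j : I} : i = K.star j ↔ j = K.star i := by
  constructor <;> rintro rfl <;> exact (K.star_star _).symm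

theorem star_one : K.star K.one = K.one := by
  by_contra hne
  simpa [K.one_mul, Ne.symm hne] using K.coeff_one K.one K.one

theorem star_eq_one_iff {i : I} : K.star i = K.one ↔ i = K.one := by
  rw [← K.star_one, K.star_involutive.injective.eq_iff, K.star_one]

/-- Frobenius reciprocity: read off the coefficient of `1` in `(b_i b_j) b_t = b_i (b_j b_t)`. -/
theorem c_star_right (i j t : I) : K.c i j (K.star t) = K.c j t (K.star i) := by
  simpa [K.coeff_one, K.eq_star_comm] using K.assoc i j t K.one

theorem c_comm_of_star_eq_self (hs : ∀ i, K.star i = i) (i j t : I) :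
    K.c i j t = K.c j i t := by
  simpa [hs] using K.star_anti i j t

theorem c_rotate_of_star_eq_self (hs : ∀ i, K.star i = i) (i j t : I) :
    K.c i j t = K.c j t i := by
  simpa [hs] using K.c_star_right i j t

def relabel {J : Type*} [Fintype J] [DecidableEq J] (e : I ≃ J) : BasedRingData J where
  c i j t := K.c (e.symm i) (e.symm j) (e.symm t)
  one := e K.one
  star i := e (K.star (e.symm i))
  nonneg _ _ _ := K.nonneg _ _ _
  one_mul i t := by simp [K.one_mul]
  mul_one i t := by simp [K.mul_one]
  assoc i j k t :=
    (Fintype.sum_equiv e.symm _ _ fun _ => rfl).trans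
      ((K.assoc _ _ _ _).trans (Fintype.sum_equiv e.symm _ _ fun _ => rfl).symm)
  star_involutive i := by simp [K.star_star]
  star_anti i j t := by simpa using K.star_anti _ _ _
  coeff_one i j := by simp [K.coeff_one, Equiv.symm_apply_eq]

theorem relabel_c_apply {J : Type*} [Fintype J] [DecidableEq J] (e : I ≃ J) (i j t : I) :
    (K.relabel e).c (e i) (e j) (e t) = K.c i j t := by
  simp [relabel]

end

section RankThree

variable (K : BasedRingData (Fin 3))

theorem c_zero_left (h0 : K.one = 0) (i t : Fin 3) : K.c 0 i t = if t = i then 1 else 0 :=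
  h0 ▸ K.one_mul i t

theorem c_zero_right (h0 : K.one = 0) (i t : Fin 3) : K.c i 0 t = if t = i then 1 else 0 :=
  h0 ▸ K.mul_one i t

theorem c_apply_zero (h0 : K.one = 0) (i j : Fin 3) :
    K.c i j 0 = if j = K.star i then 1 else 0 :=
  h0 ▸ K.coeff_one i j

theorem star_one_eq_one_or_two (h0 : K.one = 0) : K.star 1 = 1 ∨ K.star 1 = 2 := by
  have : K.star 1 ≠ 0 := by rw [← h0, Ne, star_eq_one_iff, h0]; decide
  omega

theorem star_eq_self_of_star_one_eq_one (h0 : K.one = 0) (h1 : K.star 1 = 1) (i : Fin 3) :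
    K.star i = i := by
  have h2 : K.star 2 ≠ 0 := by rw [← h0, Ne, star_eq_one_iff, h0]; decide
  have h2' : K.star 2 ≠ 1 := by rw [← h1, Ne, K.star_involutive.injective.eq_iff]; decide
  fin_cases i
  · simpa [h0] using K.star_one
  · exact h1
  · simp only [Fin.reduceFinMk, Fin.isValue]; omega

theorem c_eq_Kc (h0 : K.one = 0) (hs : ∀ i, K.star i = i) :
    K.c = Kc (K.c 1 1 2) (K.c 2 2 1) (K.c 1 1 1) (K.c 2 2 2) := by
  have h121 := (K.c_rotate_of_star_eq_self hs 1 1 2).symm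
  have h211 := K.c_rotate_of_star_eq_self hs 2 1 1
  have h122 := K.c_rotate_of_star_eq_self hs 1 2 2
  have h212 := K.c_comm_of_star_eq_self hs 2 1 2
  ext i j t
  fin_cases i <;> fin_cases j <;> fin_cases t <;>
    simp [Kc, K.c_zero_left h0, K.c_zero_right h0, K.c_apply_zero h0, hs, h121, h211, h122, h212]

theorem c_sq_add_c_sq (h0 : K.one = 0) (hs : ∀ i, K.star i = i) :
    K.c 1 1 2 ^ 2 + K.c 2 2 1 ^ 2 = K.c 1 1 2 * K.c 2 2 2 + K.c 2 2 1 * K.c 1 1 1 + 1 := by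
  have h := K.assoc 2 2 1 1
  rw [K.c_eq_Kc h0 hs] at h
  simp [Fin.sum_univ_three, Kc] at h
  linear_combination -h

theorem c_eq_ite_add_eq (h0 : K.one = 0) (h1 : K.star 1 = 2) (i j t : Fin 3) :
    K.c i j t = if i + j = t then 1 else 0 := by
  have h2 : K.star 2 = 1 := by rw [← h1, K.star_star]
  have h222 : K.c 2 2 2 = K.c 1 1 1 := by simpa [h1] using (K.star_anti 1 1 1).symm
  have h122 : K.c 1 2 2 = K.c 1 1 1 := by simpa [h1, h2] using (K.c_star_right 1 1 2).symm
  have h121 : K.c 1 2 1 = K.c 1 1 1 := by simpa [h1, h2, h122] using (K.star_anti 1 2 2).symm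
  have h211 : K.c 2 1 1 = K.c 1 1 1 := by simpa [h2, h121] using K.c_star_right 2 1 2
  have h212 : K.c 2 1 2 = K.c 1 1 1 := by simpa [h1, h2, h211] using (K.star_anti 2 1 1).symm
  have h221 : K.c 2 2 1 = K.c 1 1 2 := by simpa [h1, h2] using (K.star_anti 1 1 2).symm
  have hsq : K.c 1 1 2 ^ 2 = K.c 1 1 1 ^ 2 + 1 := by
    have := K.assoc 1 1 2 1
    simp [Fin.sum_univ_three, K.c_zero_left h0, K.c_zero_right h0, K.c_apply_zero h0, h1,
      h121, h122, h221] at this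
    linear_combination this
  obtain ⟨hp, hb⟩ :=
    Int.eq_zero_and_eq_one_of_sq_eq_sq_add_one (K.nonneg 1 1 1) (K.nonneg 1 1 2) hsq
  fin_cases i <;> fin_cases j <;> fin_cases t <;>
    simp [K.c_zero_left h0, K.c_zero_right h0, K.c_apply_zero h0, h1, h2, h222, h122, h121,
      h211, h212, h221, hp, hb]

end RankThree

end BasedRingData

/-- every unital based ring of rank 3 is isomorphic as a based ring either
to `K(k,l,m,n)` for some nonnegative integers `k, l, m, n` with `k² + l² = kn + lm + 1`,
or to the group ring `ℤ[ℤ/3ℤ]` with basis the group elements.  An isomorphism of based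
rings is here recorded as a bijection of the index sets matching the units and the
structure constants. -/
theorem stmt_1 (I : Type*) [Fintype I] [DecidableEq I] (K : BasedRingData I)
    (hrank : Fintype.card I = 3) :
    (∃ k l m n : ℤ, 0 ≤ k ∧ 0 ≤ l ∧ 0 ≤ m ∧ 0 ≤ n ∧
      k ^ 2 + l ^ 2 = k * n + l * m + 1 ∧
      ∃ e : I ≃ Fin 3, e K.one = 0 ∧
        ∀ i j t, K.c i j t = Kc k l m n (e i) (e j) (e t)) ∨
    (∃ e : I ≃ ZMod 3, e K.one = 0 ∧
        ∀ i j t, K.c i j t = Zc (e i) (e j) (e t)) := by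
  let f := Fintype.equivFinOfCardEq hrank
  let e := f.trans (Equiv.swap (f K.one) 0)
  have he : e K.one = 0 := Equiv.swap_apply_left _ _
  let L := K.relabel e
  have hL : ∀ i j t, K.c i j t = L.c (e i) (e j) (e t) := fun i j t =>
    (K.relabel_c_apply e i j t).symm
  rcases L.star_one_eq_one_or_two he with h1 | h1
  · have hs := L.star_eq_self_of_star_one_eq_one he h1
    refine Or.inl ⟨_, _, _, _, L.nonneg 1 1 2, L.nonneg 2 2 1, L.nonneg 1 1 1, L.nonneg 2 2 2,
      L.c_sq_add_c_sq he hs, e, he, fun i j t => ?_⟩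
    exact (hL i j t).trans (congr_fun₃ (L.c_eq_Kc he hs) _ _ _)
  · refine Or.inr ⟨e.trans (ZMod.finEquiv 3).toEquiv, by simp [he], fun i j t => ?_⟩
    simp only [hL, L.c_eq_ite_add_eq he h1, Equiv.trans_apply, RingEquiv.toEquiv_eq_coe,
      RingEquiv.coe_toEquiv, Zc_finEquiv]
end

section
/- Let K be a unital based ring of finite rank with basis {b_i}_{i∈I} and involution i ↦ i*, and let R be the ℚ-linear operator on K ⊗_ℤ ℚ given by left multiplication by the element Σ_{i∈I} b_i·b_{i*}. Then R is invertible and the trace of R⁻¹ equals 1. -/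
/-!
Write `L_w` for left multiplication by `w` on `K ⊗ ℚ`, `z = Σ_i b_i b_{i*}` and `τ` for
the coefficient of `1`. The axioms give the cyclic symmetry `c_{ij}^k = c_{j k*}^{i*}`, and
with it associativity turns `L_z` into `Σ_i L_{b_i} L_{b_i}ᵀ`. Since `L_1 = 1`, `L_z` is
positive definite, hence invertible. As `w ↦ L_w` is multiplicative, `L_z⁻¹ = L_w` with
`w = L_z⁻¹ 1`. Cyclic symmetry again gives `tr L_w = τ(w z)`, which is the `(1, 1)` entry
of `L_w L_z = 1`.
-/

namespace BasedRingData

open Matrix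

variable {I : Type*} [Fintype I] [DecidableEq I] (K : BasedRingData I)

theorem c_cyclic (i j k : I) : K.c i j k = K.c j (K.star k) (K.star i) := by
  simpa [K.coeff_one, K.star_involutive.injective.eq_iff] using K.assoc i j (K.star k) K.one

theorem c_star_left (i j k : I) : K.c (K.star i) j k = K.c i k j := by
  rw [K.star_anti, K.star_involutive i, K.c_cyclic (K.star j), K.star_involutive,
    K.star_involutive]

/- Elements of `K ⊗ ℚ` are coordinate vectors `I → ℚ` in the basis `b`; the column `j` of
`leftMul w` holds the coordinates of `w · b_j`. -/
def mulCoords (v w : I → ℚ) : I → ℚ := fun k => ∑ s, ∑ r, v s * w r * K.c s r k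

def leftMul (w : I → ℚ) : Matrix I I ℚ := Matrix.of fun t j => ∑ s, w s * K.c s j t

def sumMulStar : I → ℚ := fun k => ∑ i, (K.c i (K.star i) k : ℚ)

theorem leftMul_apply (w : I → ℚ) (t j : I) : K.leftMul w t j = ∑ s, w s * K.c s j t := rfl

theorem leftMul_single_apply (i t j : I) : K.leftMul (Pi.single i 1) t j = K.c i j t := by
  simp [leftMul_apply, Pi.single_apply]

theorem leftMul_apply_one (w : I → ℚ) (t : I) : K.leftMul w t K.one = w t := by
  simp [leftMul_apply, K.mul_one]

theorem leftMul_single_one : K.leftMul (Pi.single K.one 1) = 1 := by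
  ext t j
  simp [leftMul_single_apply, K.one_mul, one_apply]

theorem leftMul_mulVec (v w : I → ℚ) : K.leftMul v *ᵥ w = K.mulCoords v w := by
  ext k
  simp only [mulVec, dotProduct, leftMul_apply, mulCoords, Finset.sum_mul]
  rw [Finset.sum_comm]
  exact Finset.sum_congr rfl fun s _ => Finset.sum_congr rfl fun r _ => by ring

theorem leftMul_mul (v w : I → ℚ) :
    K.leftMul v * K.leftMul w = K.leftMul (K.mulCoords v w) := by
  ext t j
  have hassoc (s r : I) :
      ∑ u, (K.c s u t : ℚ) * K.c r j u = ∑ k, (K.c s r k : ℚ) * K.c k j t := by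
    simp_rw [mul_comm (K.c s _ t : ℚ)]
    exact_mod_cast (K.assoc s r j t).symm
  calc (K.leftMul v * K.leftMul w) t j
      = ∑ s, ∑ r, v s * w r * ∑ u, (K.c s u t : ℚ) * K.c r j u := by
        simp_rw [mul_apply, leftMul_apply, Finset.sum_mul_sum, Finset.mul_sum]
        exact Finset.sum_comm.trans <| Finset.sum_congr rfl fun s _ => Finset.sum_comm.trans <|
          Finset.sum_congr rfl fun r _ => Finset.sum_congr rfl fun u _ => by ring
    _ = ∑ s, ∑ r, v s * w r * ∑ k, (K.c s r k : ℚ) * K.c k j t := by simp_rw [hassoc]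
    _ = K.leftMul (K.mulCoords v w) t j := by
        simp only [leftMul_apply, mulCoords, Finset.sum_mul, Finset.mul_sum]
        refine Eq.symm <| Finset.sum_comm.trans <| Finset.sum_congr rfl fun s _ =>
          Finset.sum_comm.trans <| Finset.sum_congr rfl fun r _ =>
            Finset.sum_congr rfl fun u _ => by ring

theorem trace_leftMul (w : I → ℚ) : (K.leftMul w).trace = K.mulCoords w K.sumMulStar K.one := by
  have hcoeff : K.mulCoords w K.sumMulStar K.one = ∑ s, w s * K.sumMulStar (K.star s) := by
    simp [mulCoords, K.coeff_one]
  simp only [hcoeff, trace, diag_apply, leftMul_apply, sumMulStar, Finset.mul_sum]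
  rw [Finset.sum_comm]
  exact Finset.sum_congr rfl fun s _ => Finset.sum_congr rfl fun i _ => by rw [K.c_cyclic s i i]

theorem leftMul_sumMulStar_apply (t j : I) :
    K.leftMul K.sumMulStar t j = ∑ i, ∑ s, (K.c i (K.star i) s : ℚ) * K.c s j t := by
  simp only [leftMul_apply, sumMulStar, Finset.sum_mul]
  exact Finset.sum_comm

theorem leftMul_sumMulStar :
    K.leftMul K.sumMulStar = ∑ i, K.leftMul (Pi.single i 1) * (K.leftMul (Pi.single i 1))ᴴ := by
  ext t j
  have hassoc (i : I) : ∑ k, (K.c i (K.star i) k : ℚ) * K.c k j t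
      = ∑ k, (K.c i k t : ℚ) * K.c i k j := by
    simp_rw [mul_comm (K.c i _ t : ℚ), ← K.c_star_left i j]
    exact_mod_cast K.assoc i (K.star i) j t
  simp only [leftMul_sumMulStar_apply, Matrix.sum_apply, mul_apply, conjTranspose_apply,
    leftMul_single_apply, star_trivial]
  exact Finset.sum_congr rfl fun i _ => hassoc i

theorem posDef_leftMul_sumMulStar : (K.leftMul K.sumMulStar).PosDef := by
  rw [leftMul_sumMulStar, ← Finset.add_sum_erase _ _ (Finset.mem_univ K.one), leftMul_single_one,
    Matrix.one_mul, conjTranspose_one]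
  exact PosDef.one.add_posSemidef
    (posSemidef_sum _ fun i _ => posSemidef_self_mul_conjTranspose _)

theorem inv_leftMul {v : I → ℚ} (hv : IsUnit (K.leftMul v)) :
    (K.leftMul v)⁻¹ = K.leftMul ((K.leftMul v)⁻¹ *ᵥ Pi.single K.one 1) := by
  refine inv_eq_right_inv ?_
  rw [leftMul_mul, ← leftMul_mulVec, mulVec_mulVec,
    mul_nonsing_inv _ ((isUnit_iff_isUnit_det _).mp hv), one_mulVec, leftMul_single_one]

theorem trace_inv_leftMul_sumMulStar : (K.leftMul K.sumMulStar)⁻¹.trace = 1 := by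
  have hunit := K.posDef_leftMul_sumMulStar.isUnit
  rw [K.inv_leftMul hunit, trace_leftMul,
    ← K.leftMul_apply_one (K.mulCoords _ _), ← leftMul_mul, ← K.inv_leftMul hunit,
    nonsing_inv_mul _ ((isUnit_iff_isUnit_det _).mp hunit), one_apply_eq]

end BasedRingData

/-- for a unital based ring `K` of finite rank, the matrix (over ℚ) of the
operator of left multiplication by `Σ_i b_i · b_{i*}` on `K ⊗ ℚ` in the distinguished
basis is invertible, and the trace of its inverse equals `1`. -/
theorem stmt_3 (I : Type*) [Fintype I] [DecidableEq I] (K : BasedRingData I)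
    (R : Matrix I I ℚ)
    (hR : ∀ t j, R t j = ∑ i, ∑ s, (K.c i (K.star i) s : ℚ) * (K.c s j t : ℚ)) :
    IsUnit R ∧ Matrix.trace R⁻¹ = 1 := by
  obtain rfl : R = K.leftMul K.sumMulStar :=
    Matrix.ext fun t j => (hR t j).trans (K.leftMul_sumMulStar_apply t j).symm
  exact ⟨K.posDef_leftMul_sumMulStar.isUnit, K.trace_inv_leftMul_sumMulStar⟩
end

section
/- Let k, l, m, n be integers satisfying k² + l² = kn + lm + 1, and let R = R(k,l,m,n). Then Tr(R) = (k+n)² + (l+m)² + 9, and the characteristic polynomial of R equals t³ − b·t² + c·t − c, where b = Tr(R) and c = det(R); in particular the sum of the three principal 2×2 minors of R equals det(R). -/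
open Polynomial

/-- The symmetric 3×3 integer matrix `R(k,l,m,n)`. -/
def Rmat (k l m n : ℤ) : Matrix (Fin 3) (Fin 3) ℤ :=
  !![3, l + m, k + n;
     l + m, 3 + (l + m) * m + (k + n) * k, (l + m) * k + (k + n) * l;
     k + n, (l + m) * k + (k + n) * l, 3 + (l + m) * l + (k + n) * n]

/-- for integers `k, l, m, n` with `k² + l² = kn + lm + 1`, the trace of
`R = R(k,l,m,n)` equals `(k+n)² + (l+m)² + 9`, the characteristic polynomial of `R` equals
`t³ − b·t² + c·t − c` with `b = Tr(R)`, `c = det(R)`, and the sum of the three principal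
2×2 minors of `R` equals `det(R)`. -/
theorem stmt_5 (k l m n : ℤ) (h : k ^ 2 + l ^ 2 = k * n + l * m + 1)
    (R : Matrix (Fin 3) (Fin 3) ℤ) (hR : R = Rmat k l m n)
    (b c : ℤ) (hb : b = Matrix.trace R) (hc : c = Matrix.det R) :
    Matrix.trace R = (k + n) ^ 2 + (l + m) ^ 2 + 9 ∧
    Matrix.charpoly R = X ^ 3 - C b * X ^ 2 + C c * X - C c ∧
    (R 0 0 * R 1 1 - R 0 1 * R 1 0) + (R 0 0 * R 2 2 - R 0 2 * R 2 0)
      + (R 1 1 * R 2 2 - R 1 2 * R 2 1) = Matrix.det R := by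
  subst hR hb hc
  refine ⟨?_, ?_, ?_⟩
  · simp [Rmat, Matrix.trace_fin_three]
    ring
  · have hC : ((k : ℤ[X]) ^ 2 + (l : ℤ[X]) ^ 2)
        = (k : ℤ[X]) * n + (l : ℤ[X]) * m + 1 := by exact_mod_cast congrArg (fun z : ℤ => (z : ℤ[X])) h
    have hcm : Matrix.charmatrix (Rmat k l m n) =
        !![X - C 3, -C (l + m), -C (k + n);
           -C (l + m), X - C (3 + (l + m) * m + (k + n) * k), -C ((l + m) * k + (k + n) * l);
           -C (k + n), -C ((l + m) * k + (k + n) * l), X - C (3 + (l + m) * l + (k + n) * n)] := by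
      ext i j
      fin_cases i <;> fin_cases j <;> simp [Matrix.charmatrix, Rmat]
    rw [Matrix.charpoly, hcm]
    simp [Matrix.det_fin_three, Matrix.trace_fin_three, Rmat, Polynomial.C_eq_intCast]
    linear_combination (X * (((k : ℤ[X]) + n) ^ 2 + ((l : ℤ[X]) + m) ^ 2)) * hC
  · simp [Rmat, Matrix.det_fin_three]
    linear_combination ((k + n) ^ 2 + (l + m) ^ 2) * h
end

section
/- Let b and c be integers with b ≥ 50 and c − 4b > 4. Then there do not exist real numbers f₁, f₂, f₃ with 0 < f₁ ≤ f₂ ≤ f₃ such that f₁ + f₂ + f₃ = b, f₁f₂ + f₁f₃ + f₂f₃ = c, f₁f₂f₃ = c, and f₃ ≤ c/(c − 4b). -/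
/-- for integers `b ≥ 50` and `c − 4b > 4`, there are no real numbers
`0 < f₁ ≤ f₂ ≤ f₃` with `f₁ + f₂ + f₃ = b`, `f₁f₂ + f₁f₃ + f₂f₃ = c`, `f₁f₂f₃ = c`
and `f₃ ≤ c/(c − 4b)`. -/
theorem stmt_7 (b c : ℤ) (hb : 50 ≤ b) (hc : 4 < c - 4 * b) :
    ¬ ∃ f₁ f₂ f₃ : ℝ, 0 < f₁ ∧ f₁ ≤ f₂ ∧ f₂ ≤ f₃ ∧
      f₁ + f₂ + f₃ = (b : ℝ) ∧
      f₁ * f₂ + f₁ * f₃ + f₂ * f₃ = (c : ℝ) ∧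
      f₁ * f₂ * f₃ = (c : ℝ) ∧
      f₃ ≤ (c : ℝ) / ((c : ℝ) - 4 * (b : ℝ)) := by
  rintro ⟨f₁, f₂, f₃, h0, h12, h23, hsum, hpair, hprod, hle⟩
  have hb' : (50 : ℝ) ≤ (b : ℝ) := by exact_mod_cast hb
  have hcz : (5 : ℤ) ≤ c - 4 * b := by linarith
  have hc' : (5 : ℝ) ≤ (c : ℝ) - 4 * (b : ℝ) := by exact_mod_cast hcz
  have hd : (0 : ℝ) < (c : ℝ) - 4 * (b : ℝ) := by linarith
  -- clear the division
  have h4 : f₃ * ((c : ℝ) - 4 * (b : ℝ)) ≤ (c : ℝ) := by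
    have := (le_div_iff₀ hd).mp hle
    linarith
  -- basic bounds
  have hf3 : (50 : ℝ) / 3 ≤ f₃ := by linarith
  have hspos : 0 < f₁ + f₂ := by linarith
  -- key identity : c * (f₃ - 1) = (f₁ + f₂) * f₃ ^ 2
  have hpp : f₁ * f₂ * (f₃ - 1) = (f₁ + f₂) * f₃ := by
    linear_combination hprod - hpair
  have key : (c : ℝ) * (f₃ - 1) = (f₁ + f₂) * f₃ ^ 2 := by
    linear_combination (1 - f₃) * hprod + f₃ * hpp
  -- s * f₃ ≤ 4b
  have h5 : (f₁ + f₂) * f₃ ^ 2 ≤ 4 * (b : ℝ) * f₃ := by nlinarith [key, h4]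
  have hf3pos : 0 < f₃ := by linarith
  have h6 : (f₁ + f₂) * f₃ ≤ 4 * (b : ℝ) := by
    have := mul_le_mul_of_nonneg_right (le_refl ((f₁ + f₂) * f₃)) (le_of_lt hf3pos)
    nlinarith [h5, hf3pos]
  have h7 : (f₁ + f₂) * (f₃ - 4) ≤ 4 * f₃ := by nlinarith [h6, hsum]
  -- s ≤ 100/19, hence f₃ large
  have h8 : f₁ + f₂ ≤ 100 / 19 := by nlinarith [h7, hf3, hspos]
  have h9 : (850 : ℝ) / 19 ≤ f₃ := by linarith
  -- c - 4b ≥ 5, multiplied by f₃ - 1 > 0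
  have hf31 : (0 : ℝ) < f₃ - 1 := by linarith
  have h10 : (f₁ + f₂) * (f₃ - 2) ^ 2 ≥ (4 * f₃ + 5) * (f₃ - 1) := by
    have := mul_le_mul_of_nonneg_right hc' (le_of_lt hf31)
    nlinarith [key, hsum]
  -- final contradiction
  nlinarith [mul_le_mul_of_nonneg_right h7 (sq_nonneg (f₃ - 2)),
    mul_le_mul_of_nonneg_right h10 (by linarith : (0:ℝ) ≤ f₃ - 4), h9, sq_nonneg f₃]
end

section
/- There are infinitely many pairs (k, l) of positive integers satisfying k² = 2l² + 2. -/
private def pellSeq : ℕ → ℤ × ℤ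
  | 0 => (2, 1)
  | n + 1 => let p := pellSeq n; (3 * p.1 + 4 * p.2, 2 * p.1 + 3 * p.2)

private lemma pellSeq_mem (n : ℕ) :
    0 < (pellSeq n).1 ∧ 0 < (pellSeq n).2 ∧
      (pellSeq n).1 ^ 2 = 2 * (pellSeq n).2 ^ 2 + 2 := by
  induction n with
  | zero => norm_num [pellSeq]
  | succ n ih =>
    obtain ⟨h1, h2, h3⟩ := ih
    refine ⟨by simp [pellSeq]; linarith, by simp [pellSeq]; linarith, ?_⟩
    simp only [pellSeq]
    ring_nf
    ring_nf at h3
    linarith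

private lemma pellSeq_fst_mono : StrictMono (fun n => (pellSeq n).1) := by
  apply strictMono_nat_of_lt_succ
  intro n
  obtain ⟨h1, h2, _⟩ := pellSeq_mem n
  simp only [pellSeq]
  linarith

/-- there are infinitely many pairs `(k, l)` of positive integers
satisfying `k² = 2l² + 2`. -/
theorem stmt_9 :
    {p : ℤ × ℤ | 0 < p.1 ∧ 0 < p.2 ∧ p.1 ^ 2 = 2 * p.2 ^ 2 + 2}.Infinite := by
  apply Set.infinite_of_injective_forall_mem (f := pellSeq)
  · intro a b hab
    have := congrArg Prod.fst hab
    exact pellSeq_fst_mono.injective this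
  · exact pellSeq_mem
end

section
/- Let k, l, m, n be positive integers satisfying k² + l² = kn + lm + 1, k² − lm = 2, and k² = 2l² + 2. Then l² − kn = −1, m = 2l, k = 2n, 2·Tr(R(k,l,m,n)) = 27(l² + 1), and det(R(k,l,m,n)) = 4·Tr(R(k,l,m,n)). -/
/-- for positive integers `k, l, m, n` with `k² + l² = kn + lm + 1`,
`k² − lm = 2` and `k² = 2l² + 2`, one has `l² − kn = −1`, `m = 2l`, `k = 2n`,
`2·Tr(R) = 27(l² + 1)` and `det(R) = 4·Tr(R)`. -/
theorem stmt_10 (k l m n : ℤ) (hk : 0 < k) (hl : 0 < l) (hm : 0 < m) (hn : 0 < n)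
    (h1 : k ^ 2 + l ^ 2 = k * n + l * m + 1)
    (h2 : k ^ 2 - l * m = 2) (h3 : k ^ 2 = 2 * l ^ 2 + 2) :
    l ^ 2 - k * n = -1 ∧ m = 2 * l ∧ k = 2 * n ∧
    2 * Matrix.trace (Rmat k l m n) = 27 * (l ^ 2 + 1) ∧
    Matrix.det (Rmat k l m n) = 4 * Matrix.trace (Rmat k l m n) := by
  have hkn : l ^ 2 - k * n = -1 := by linarith
  have hml : m = 2 * l := by
    have : l * m = l * (2 * l) := by linarith [sq_nonneg l]; 
    exact mul_left_cancel₀ hl.ne' this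
  have hk2 : k = 2 * n := by
    have : k * k = k * (2 * n) := by nlinarith
    exact mul_left_cancel₀ hk.ne' this
  have hn2 : 2 * n ^ 2 = l ^ 2 + 1 := by nlinarith
  subst hml hk2
  refine ⟨hkn, rfl, rfl, ?_, ?_⟩
  · simp [Rmat, Matrix.trace, Matrix.diag, Fin.sum_univ_three]
    linarith
  · simp [Rmat, Matrix.det_fin_three, Matrix.trace, Matrix.diag, Fin.sum_univ_three]
    nlinarith [hn2, sq_nonneg l, sq_nonneg n]
end

section
/- For every integer b > 27, the polynomial t³ − b·t² + 4b·t − 4b is irreducible over ℚ. -/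
open Polynomial

/-- for every integer `b > 27`, the polynomial `t³ − b·t² + 4b·t − 4b`
is irreducible over ℚ. -/
theorem stmt_11 (b : ℤ) (hb : 27 < b) :
    Irreducible ((X ^ 3 - C (b : ℚ) * X ^ 2 + C (4 * (b : ℚ)) * X - C (4 * (b : ℚ))) : ℚ[X]) := by
  set q : ℤ[X] := X ^ 3 - C b * X ^ 2 + C (4 * b) * X - C (4 * b) with hq
  have hqmonic : q.Monic := by
    unfold q; monicity!
  have hmap : q.map (Int.castRingHom ℚ) =
      X ^ 3 - C (b : ℚ) * X ^ 2 + C (4 * (b : ℚ)) * X - C (4 * (b : ℚ)) := by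
    simp [hq, map_ofNat]
  rw [← hmap]
  have hm : (q.map (Int.castRingHom ℚ)).Monic := hqmonic.map _
  have hdeg : (q.map (Int.castRingHom ℚ)).natDegree = 3 := by
    rw [hmap]; compute_degree!
  rw [hm.irreducible_iff_roots_eq_zero_of_degree_le_three (by omega) (by omega)]
  rw [Multiset.eq_zero_iff_forall_notMem]
  intro r hr
  rw [mem_roots hm.ne_zero] at hr
  have haev : aeval r q = 0 := by rwa [aeval_def, ← eval_map]
  obtain ⟨n, hn⟩ := isInteger_of_is_root_of_monic hqmonic haev
  rw [← hn] at haev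
  have key : (n : ℤ) ^ 3 - b * n ^ 2 + 4 * b * n - 4 * b = 0 := by
    have : ((n : ℚ)) ^ 3 - (b : ℚ) * n ^ 2 + 4 * b * n - 4 * b = 0 := by
      simpa [hq, map_ofNat] using haev
    exact_mod_cast this
  obtain ⟨m, rfl⟩ : ∃ m, n = m + 2 := ⟨n - 2, by ring⟩
  have h1 : b * m ^ 2 = m ^ 3 + 6 * m ^ 2 + 12 * m + 8 := by linear_combination -key
  have hdvd : m ∣ 8 := ⟨b * m - m ^ 2 - 6 * m - 12, by linear_combination -h1⟩
  have h2 : m ≤ 8 := Int.le_of_dvd (by norm_num) hdvd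
  have h3 : (-8 : ℤ) ≤ m := by
    have := Int.le_of_dvd (by norm_num : (0:ℤ) < 8) ((neg_dvd).mpr hdvd)
    linarith
  interval_cases m <;> norm_num at h1 <;> omega
end

section
/- Let b and c be positive integers such that c divides b³ and b ≡ 2 or 3 (mod 4). Then the polynomial t³ − b·t² + c·t − c is irreducible over ℚ. -/
open Polynomial


lemma key_no_int_root (b c r : ℤ) (hb : 0 < b) (hc : 0 < c) (hdvd : c ∣ b ^ 3)
    (hmod : b % 4 = 2 ∨ b % 4 = 3) (heq : r ^ 3 - b * r ^ 2 + c * r - c = 0) : False := by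
  have hr0 : r ≠ 0 := by rintro rfl; simp at heq; omega
  have hfac : r ^ 2 * (r - b) = c * (1 - r) := by linear_combination heq
  have hcop1 : IsCoprime r (1 - r) := ⟨1, 1, by ring⟩
  have hcop : IsCoprime (r ^ 2) (1 - r) := hcop1.pow_left
  obtain ⟨m, hm⟩ : r ^ 2 ∣ c := hcop.dvd_of_dvd_mul_right ⟨r - b, hfac.symm⟩
  have hmb : m * (1 - r) = r - b := by
    have h2 : r ^ 2 * (m * (1 - r)) = r ^ 2 * (r - b) := by rw [hfac, hm]; ring
    exact mul_left_cancel₀ (pow_ne_zero 2 hr0) h2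
  rcases hmod with hb4 | hb4
  · -- b % 4 = 2
    have hb3 : b ^ 3 % 16 = 8 := by
      obtain ⟨t, ht⟩ : ∃ t, b = 4 * t + 2 := ⟨b / 4, by omega⟩
      have : b ^ 3 = 16 * (4 * t ^ 3 + 6 * t ^ 2 + 3 * t) + 8 := by rw [ht]; ring
      omega
    have h16 : 16 ∣ c → False := fun h => by have := Int.le_of_dvd (by positivity) (h.trans hdvd); have := h.trans hdvd; omega
    have hre : 2 ∣ r := by
      by_contra h
      obtain ⟨k, hk⟩ : ∃ k, r = 2 * k + 1 := ⟨r / 2, by omega⟩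
      have : 2 ∣ r - b := ⟨-(m * k), by linear_combination -hmb - m * hk⟩
      omega
    obtain ⟨s, hs⟩ := hre
    have hme : 2 ∣ m := by
      have h2 : (2 : ℤ) ∣ m * (1 - r) := by rw [hmb, hs]; exact ⟨s - b / 2, by omega⟩
      rcases Int.prime_two.dvd_mul.mp h2 with h | h
      · exact h
      · omega
    have hr4 : r % 4 = 0 ∨ r % 4 = 2 := by omega
    rcases hr4 with h4 | h4
    · obtain ⟨k, hk⟩ : ∃ k, r = 4 * k := ⟨r / 4, by omega⟩
      exact h16 ⟨k ^ 2 * m, by rw [hm, hk]; ring⟩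
    · obtain ⟨k, hk⟩ : ∃ k, r = 4 * k + 2 := ⟨r / 4, by omega⟩
      obtain ⟨t, ht⟩ : ∃ t, b = 4 * t + 2 := ⟨b / 4, by omega⟩
      obtain ⟨j, hj⟩ : (4 : ℤ) ∣ m := ⟨t - k - k * m, by linear_combination -hmb - (m + 1) * hk + ht⟩
      exact h16 ⟨(2 * k + 1) ^ 2 * j, by rw [hm, hk, hj]; ring⟩
  · -- b % 4 = 3
    have hcodd : ¬ (2 : ℤ) ∣ c := by
      intro h
      have := Int.prime_two.dvd_of_dvd_pow (h.trans hdvd)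
      omega
    have hrodd : ¬ (2 : ℤ) ∣ r := by
      rintro ⟨s, hs⟩
      exact hcodd ⟨2 * s ^ 2 * m, by rw [hm, hs]; ring⟩
    have hmodd : ¬ (2 : ℤ) ∣ m := by
      rintro ⟨j, hj⟩
      exact hcodd ⟨r ^ 2 * j, by rw [hm, hj]; ring⟩
    have hr4 : r % 4 = 1 ∨ r % 4 = 3 := by omega
    rcases hr4 with h4 | h4
    · obtain ⟨k, hk⟩ : ∃ k, r = 4 * k + 1 := ⟨r / 4, by omega⟩
      have : 4 ∣ r - b := ⟨-(m * k), by linear_combination -hmb - m * hk⟩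
      omega
    · obtain ⟨k, hk⟩ : ∃ k, r = 4 * k + 3 := ⟨r / 4, by omega⟩
      obtain ⟨j, hj⟩ : ∃ j, m = 2 * j + 1 := ⟨m / 2, by omega⟩
      subst hk hj
      have : 4 ∣ 4 * k + 3 - b + 2 := ⟨-(2 * j * k + j + k), by linear_combination -hmb⟩
      omega

/-- for positive integers `b`, `c` with `c ∣ b³` and `b ≡ 2` or `3 (mod 4)`,
the polynomial `t³ − b·t² + c·t − c` is irreducible over ℚ. -/
theorem stmt_12 (b c : ℤ) (hb : 0 < b) (hc : 0 < c) (hdvd : c ∣ b ^ 3)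
    (hmod : b % 4 = 2 ∨ b % 4 = 3) :
    Irreducible ((X ^ 3 - C (b : ℚ) * X ^ 2 + C (c : ℚ) * X - C (c : ℚ)) : ℚ[X]) := by
  set P : ℚ[X] := X ^ 3 - C (b : ℚ) * X ^ 2 + C (c : ℚ) * X - C (c : ℚ) with hP
  have hdeg : P.natDegree = 3 := by unfold P; compute_degree!
  rw [irreducible_iff_roots_eq_zero_of_degree_le_three (by omega) (by omega)]
  rw [Multiset.eq_zero_iff_forall_notMem]
  intro x hx
  have hP0 : P ≠ 0 := fun h => by simp [h] at hdeg
  rw [mem_roots hP0] at hx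
  have hx' : x ^ 3 - (b : ℚ) * x ^ 2 + (c : ℚ) * x - (c : ℚ) = 0 := by
    simpa [hP, IsRoot] using hx
  set q : ℤ[X] := X ^ 3 - C b * X ^ 2 + C c * X - C c with hq
  have hqm : q.Monic := by unfold q; monicity!
  have hint : IsIntegral ℤ x := by
    refine ⟨q, hqm, ?_⟩
    rw [eval₂_eq_eval_map]
    have hmap : q.map (algebraMap ℤ ℚ) = P := by
      simp only [hq, hP, Polynomial.map_sub, Polynomial.map_add, Polynomial.map_mul,
        Polynomial.map_pow, map_X, map_C, Polynomial.map_intCast, eq_intCast, Int.cast_id, C_eq_intCast]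
    rw [hmap]
    exact hx
  obtain ⟨r, hr⟩ := IsIntegrallyClosed.isIntegral_iff.mp hint
  have hrx : (r : ℚ) = x := by rw [← hr]; simp
  have heqZ : r ^ 3 - b * r ^ 2 + c * r - c = 0 := by
    have : (r : ℚ) ^ 3 - (b : ℚ) * (r : ℚ) ^ 2 + (c : ℚ) * r - c = 0 := by
      rw [hrx]; exact hx'
    exact_mod_cast this
  exact key_no_int_root b c r hb hc hdvd hmod heqZ
end

section
/- If integers A and B satisfy A² + B² + 25 = 3AB, then 5 divides A and 5 divides B. -/
/-- if integers `A`, `B` satisfy `A² + B² + 25 = 3AB`, then `5 ∣ A` and `5 ∣ B`. -/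
theorem stmt_13 (A B : ℤ) (h : A ^ 2 + B ^ 2 + 25 = 3 * A * B) :
    (5 : ℤ) ∣ A ∧ (5 : ℤ) ∣ B := by
  have hp : Prime (5 : ℤ) := by norm_num
  have hk2 : (2 * A - 3 * B) ^ 2 = 5 * (B ^ 2 - 20) := by ring_nf; nlinarith [h]
  have hk : (5 : ℤ) ∣ 2 * A - 3 * B :=
    hp.dvd_of_dvd_pow (n := 2) ⟨B ^ 2 - 20, hk2⟩
  obtain ⟨m, hm⟩ := hk
  have hB2 : B ^ 2 = 5 * (m ^ 2 + 4) := by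
    have h' := hk2; rw [hm] at h'; ring_nf at h'; linarith
  have hB : (5 : ℤ) ∣ B := hp.dvd_of_dvd_pow (n := 2) ⟨m ^ 2 + 4, hB2⟩
  obtain ⟨b, hb⟩ := hB
  exact ⟨by omega, ⟨b, hb⟩⟩
end

section
/- There do not exist positive integers A and B with B < A < 2B satisfying A² + B² + 1 = 3AB. -/
/-- there are no positive integers `A`, `B` with `B < A < 2B`
satisfying `A² + B² + 1 = 3AB`. -/
theorem stmt_14 :
    ¬ ∃ A B : ℤ, 0 < A ∧ 0 < B ∧ B < A ∧ A < 2 * B ∧ A ^ 2 + B ^ 2 + 1 = 3 * A * B := by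
  rintro ⟨A, B, hA, hB, h1, h2, h3⟩
  have hk : 1 ≤ A - B := by omega
  have hk2 : A - B ≤ B - 1 := by omega
  nlinarith [mul_pos (sub_pos.mpr h1) (by omega : (0:ℤ) < 2*B - A), sq_nonneg (A - B)]
end

section
/- The only positive integers A and B with B < A < 2B satisfying A² + B² + 5 = 3AB are A = 3 and B = 2. -/
/-- the only positive integers `A`, `B` with `B < A < 2B` satisfying
`A² + B² + 5 = 3AB` are `A = 3`, `B = 2`. -/
theorem stmt_15 (A B : ℤ) :
    (0 < A ∧ 0 < B ∧ B < A ∧ A < 2 * B ∧ A ^ 2 + B ^ 2 + 5 = 3 * A * B)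
      ↔ (A = 3 ∧ B = 2) := by
  constructor
  · rintro ⟨hA, hB, h1, h2, h⟩
    -- A*B = (A-B)^2 + 5, with 1 ≤ A-B ≤ B-1 forces B ≤ 2
    have hB2 : B ≤ 2 := by nlinarith [sq_nonneg (A - B), sq_nonneg (A - B - 1)]
    interval_cases B
    · omega
    · constructor
      · nlinarith [sq_nonneg (A - 3)]
      · rfl
  · rintro ⟨rfl, rfl⟩
    norm_num
end
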